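/- Let q be a real number with 0<q<1, let f be a positive integer, let χ be a Dirichlet character modulo f with values in ℂ, and let x>0 and w₁>0 be real. Then the function s ↦ w₁·Σ_{n=1}^∞ χ(n)·q^{w₁n}·[x+w₁n]_q^{-s} is entire, i.e. complex differentiable at every point of ℂ. (The two-variable Dirichlet q-L-function needs no analytic continuation: for |q|<1 its defining series is an entire function of s.) -/

import Mathlib

/-!
For `0 < q < 1` the `q`-numbers `[x + w₁ n]_q` stay in a compact interval `[m, M]` of `(0, ∞)`,
so on the ball `|s| < R` every factor `[x + w₁ n]_q^{-s}` is bounded by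
`max (m^{-R}) (M^R)`, while the coefficients `q^{w₁ n}` decay geometrically. The series thus
converges normally on every ball, and a locally uniform limit of entire functions is entire.
-/

open Complex

/-- The `q`-number `[y]_q = (1 - q^y)/(1 - q)`, where `q^y` is the real power. -/
noncomputable def qNum (q y : ℝ) : ℝ := (1 - q ^ y) / (1 - q)

lemma Real.rpow_le_max_of_mem_Icc {a m M t R : ℝ} (hm : 0 < m) (ha : a ∈ Set.Icc m M)
    (ht : |t| ≤ R) : a ^ t ≤ max (m ^ (-R)) (M ^ R) := by
  have ha0 : 0 < a := hm.trans_le ha.1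
  rcases le_or_gt 1 a with h1 | h1
  · calc a ^ t ≤ a ^ R := Real.rpow_le_rpow_of_exponent_le h1 ((le_abs_self t).trans ht)
      _ ≤ M ^ R := Real.rpow_le_rpow ha0.le ha.2 ((abs_nonneg t).trans ht)
      _ ≤ _ := le_max_right _ _
  · calc a ^ t ≤ a ^ (-R) :=
          Real.rpow_le_rpow_of_exponent_ge ha0 h1.le (by linarith [neg_abs_le t])
      _ ≤ m ^ (-R) := Real.rpow_le_rpow_of_nonpos hm ha.1 (by linarith [abs_nonneg t])
      _ ≤ _ := le_max_left _ _

theorem differentiable_tsum_mul_cpow_neg {ι : Type*} {c : ι → ℂ} {a : ι → ℝ} {m M : ℝ}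
    (hm : 0 < m) (hc : Summable fun i => ‖c i‖) (ha : ∀ i, a i ∈ Set.Icc m M) :
    Differentiable ℂ fun s : ℂ => ∑' i, c i * (a i : ℂ) ^ (-s) := by
  intro s₀
  set R := ‖s₀‖ + 1
  have ha0 : ∀ i, 0 < a i := fun i => hm.trans_le (ha i).1
  have hdiff : DifferentiableOn ℂ (fun s : ℂ => ∑' i, c i * (a i : ℂ) ^ (-s))
      (Metric.ball 0 R) := by
    refine differentiableOn_tsum_of_summable_norm (hc.mul_right (max (m ^ (-R)) (M ^ R)))
      (fun i => ?_) Metric.isOpen_ball fun i s hs => ?_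
    · exact ((differentiable_neg.const_cpow
        (Or.inl (ofReal_ne_zero.mpr (ha0 i).ne'))).const_mul _).differentiableOn
    · have hre : |(-s).re| ≤ R := by
        rw [mem_ball_zero_iff] at hs
        exact (abs_re_le_norm _).trans (by rw [norm_neg]; exact hs.le)
      rw [norm_mul, norm_cpow_eq_rpow_re_of_pos (ha0 i)]
      gcongr
      exact Real.rpow_le_max_of_mem_Icc hm (ha i) hre
  exact hdiff.differentiableAt (Metric.isOpen_ball.mem_nhds (by simp [R]))

section qNum

variable {q : ℝ} (hq0 : 0 < q) (hq1 : q < 1)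
include hq0 hq1

lemma qNum_pos {y : ℝ} (hy : 0 < y) : 0 < qNum q y :=
  div_pos (sub_pos.mpr (Real.rpow_lt_one hq0.le hq1 hy)) (sub_pos.mpr hq1)

lemma qNum_monotone : Monotone (qNum q) := fun _ _ hyz =>
  div_le_div_of_nonneg_right
    (sub_le_sub_left (Real.rpow_le_rpow_of_exponent_ge hq0 hq1.le hyz) 1) (sub_pos.mpr hq1).le

lemma qNum_le_inv_one_sub (y : ℝ) : qNum q y ≤ (1 - q)⁻¹ := by
  rw [qNum, div_eq_mul_inv]
  exact mul_le_of_le_one_left (inv_pos.mpr (sub_pos.mpr hq1)).le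
    (sub_le_self _ (Real.rpow_nonneg hq0.le y))

lemma summable_rpow_mul_succ {w : ℝ} (hw : 0 < w) :
    Summable fun n : ℕ => q ^ (w * ((n : ℝ) + 1)) := by
  have hqw : q ^ w < 1 := Real.rpow_lt_one hq0.le hq1 hw
  refine ((summable_geometric_of_lt_one (Real.rpow_nonneg hq0.le w) hqw).mul_left (q ^ w)).congr
    fun n => ?_
  rw [← pow_succ', ← Real.rpow_natCast, ← Real.rpow_mul hq0.le]
  push_cast
  ring_nf

end qNum

theorem stmt14_general (q : ℝ) (hq0 : 0 < q) (hq1 : q < 1) (f : ℕ)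
    (χ : DirichletCharacter ℂ f) (x w₁ : ℝ) (hx : 0 < x) (hw₁ : 0 < w₁) :
    Differentiable ℂ (fun s : ℂ => (w₁ : ℂ) * ∑' n : ℕ, χ ((n + 1 : ℕ) : ZMod f) *
      ((q ^ (w₁ * ((n : ℝ) + 1)) : ℝ) : ℂ) *
      ((qNum q (x + w₁ * ((n : ℝ) + 1)) : ℝ) : ℂ) ^ (-s)) := by
  have hcoeff : Summable fun n : ℕ =>
      ‖χ ((n + 1 : ℕ) : ZMod f) * ((q ^ (w₁ * ((n : ℝ) + 1)) : ℝ) : ℂ)‖ := by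
    refine (summable_rpow_mul_succ hq0 hq1 hw₁).of_nonneg_of_le (fun _ => norm_nonneg _)
      fun n => ?_
    rw [norm_mul, norm_real, Real.norm_of_nonneg (Real.rpow_nonneg hq0.le _)]
    exact mul_le_of_le_one_left (Real.rpow_nonneg hq0.le _) (χ.norm_le_one _)
  have hbounds : ∀ n : ℕ, qNum q (x + w₁ * ((n : ℝ) + 1)) ∈
      Set.Icc (qNum q (x + w₁)) (1 - q)⁻¹ := fun n =>
    ⟨qNum_monotone hq0 hq1 (by nlinarith [n.cast_nonneg (α := ℝ)]),
      qNum_le_inv_one_sub hq0 hq1 _⟩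
  exact (differentiable_tsum_mul_cpow_neg (qNum_pos hq0 hq1 (by linarith)) hcoeff
    hbounds).const_mul _

/-- For `0 < q < 1` the two-variable Dirichlet `q`-`L`-function
`s ↦ w₁·Σ_{n≥1} χ(n)·q^{w₁n}·[x+w₁n]_q^{-s}` is an entire function of `s`. -/
theorem stmt14 (q : ℝ) (hq0 : 0 < q) (hq1 : q < 1) (f : ℕ) (hf : 0 < f)
    (χ : DirichletCharacter ℂ f) (x w₁ : ℝ) (hx : 0 < x) (hw₁ : 0 < w₁) :
    Differentiable ℂ (fun s : ℂ => (w₁ : ℂ) * ∑' n : ℕ, χ ((n + 1 : ℕ) : ZMod f) *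
      ((q ^ (w₁ * ((n : ℝ) + 1)) : ℝ) : ℂ) *
      ((qNum q (x + w₁ * ((n : ℝ) + 1)) : ℝ) : ℂ) ^ (-s)) :=
  stmt14_general q hq0 hq1 f χ x w₁ hx hw₁
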